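/- arXiv:1807.04491 — 4 statements merged into one kernel-verified Lean document; each statement's English description precedes it below -/
import Mathlib

section
/- For β ∈ (1,2), if two sequences (s_k), (t_k) ∈ X_β satisfy ∑_{k=1}^∞ s_{-k} β^{-k} = ∑_{k=1}^∞ t_{-k} β^{-k}, then s_{-k} = t_{-k} for all k ≥ 1 (uniqueness of β-expansions within the β-shift). -/
/-!
If the digits are integers and every tail `∑ₖ a (n+1+k) β^{-(k+1)}` lies in `[0, 1)`, then
`β · value a = a₀ + value (shift a)` with the second summand in `[0, 1)`. Hence
`a₀ = ⌊β · value a⌋` and `value (shift a) = fract (β · value a)`: the digits are those produced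
by iterating the β-transformation `x ↦ fract (β x)` on the value, so the value determines them.
Sequences of `X_β`, read off at negative indices, are such digit sequences.
-/
noncomputable def betaValue (β : ℝ) (a : ℕ → ℝ) : ℝ := ∑' k, a k * β⁻¹ ^ (k + 1)

structure IsGreedyBetaExpansion (β : ℝ) (a : ℕ → ℝ) : Prop where
  isInt : ∀ k, ∃ m : ℤ, a k = m
  summable : Summable fun k => a k * β⁻¹ ^ (k + 1)
  tail_mem : ∀ n, betaValue β (fun k => a (k + n + 1)) ∈ Set.Ico 0 1

theorem mul_betaValue_of_summable {β : ℝ} (hβ : β ≠ 0) {a : ℕ → ℝ}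
    (ha : Summable fun k => a k * β⁻¹ ^ (k + 1)) :
    β * betaValue β a = a 0 + betaValue β (fun k => a (k + 1)) := by
  rw [betaValue, ha.tsum_eq_zero_add, mul_add, betaValue, ← tsum_mul_left]
  congr 1
  · rw [zero_add, pow_one, mul_left_comm, mul_inv_cancel₀ hβ, mul_one]
  · exact tsum_congr fun k => by rw [pow_succ _ (k + 1)]; field_simp

namespace IsGreedyBetaExpansion

variable {β : ℝ} {a b : ℕ → ℝ}

theorem shift (hβ : β ≠ 0) (ha : IsGreedyBetaExpansion β a) :
    IsGreedyBetaExpansion β (fun k => a (k + 1)) where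
  isInt k := ha.isInt (k + 1)
  summable := by
    rw [← summable_mul_left_iff (inv_ne_zero hβ)]
    refine ((summable_nat_add_iff 1).mpr ha.summable).congr fun k => ?_
    ring
  tail_mem n := ha.tail_mem (n + 1)

theorem head_eq_floor (hβ : β ≠ 0) (ha : IsGreedyBetaExpansion β a) :
    a 0 = ⌊β * betaValue β a⌋ := by
  obtain ⟨m, hm⟩ := ha.isInt 0
  rw [mul_betaValue_of_summable hβ ha.summable, hm, Int.floor_intCast_add,
    Int.floor_eq_zero_iff.mpr (ha.tail_mem 0), add_zero]

theorem fract_eq_betaValue_shift (hβ : β ≠ 0) (ha : IsGreedyBetaExpansion β a) :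
    Int.fract (β * betaValue β a) = betaValue β (fun k => a (k + 1)) := by
  obtain ⟨m, hm⟩ := ha.isInt 0
  rw [mul_betaValue_of_summable hβ ha.summable, hm, Int.fract_intCast_add, Int.fract_eq_self]
  exact ha.tail_mem 0

theorem eq_of_betaValue_eq (hβ : β ≠ 0) (ha : IsGreedyBetaExpansion β a)
    (hb : IsGreedyBetaExpansion β b)
    (h : betaValue β a = betaValue β b) : a = b := by
  funext n
  induction n generalizing a b with
  | zero => rw [ha.head_eq_floor hβ, hb.head_eq_floor hβ, h]
  | succ n ih =>
    refine ih (ha.shift hβ) (hb.shift hβ) ?_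
    rw [← ha.fract_eq_betaValue_shift hβ, ← hb.fract_eq_betaValue_shift hβ, h]

end IsGreedyBetaExpansion

section Binary

variable {β : ℝ} {a : ℕ → ℝ}

theorem summable_binary_mul_inv_pow (hβ : 1 < β) (h01 : ∀ k, a k = 0 ∨ a k = 1) :
    Summable fun k => a k * β⁻¹ ^ (k + 1) := by
  have hgeo : Summable fun k => β⁻¹ ^ (k + 1) :=
    (summable_nat_add_iff 1).mpr
      (summable_geometric_of_lt_one (by positivity) (inv_lt_one_of_one_lt₀ hβ))
  refine hgeo.of_nonneg_of_le (fun k => ?_) (fun k => ?_) <;>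
    rcases h01 k with h | h <;> simp [h] <;> positivity

theorem IsGreedyBetaExpansion.of_binary (hβ : 1 < β) (h01 : ∀ k, a k = 0 ∨ a k = 1)
    (htail : ∀ n, betaValue β (fun k => a (k + n + 1)) < 1) :
    IsGreedyBetaExpansion β a where
  isInt k := by
    rcases h01 k with h | h
    exacts [⟨0, by simp [h]⟩, ⟨1, by simp [h]⟩]
  summable := summable_binary_mul_inv_pow hβ h01
  tail_mem n := by
    refine ⟨tsum_nonneg fun k => ?_, htail n⟩
    rcases h01 (k + n + 1) with h | h <;> simp only [h] <;> positivity

end Binary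

theorem isGreedyBetaExpansion_of_betaShift {β : ℝ} (hβ : 1 < β) {s : ℤ → ℝ}
    (h01 : ∀ k, s k = 0 ∨ s k = 1)
    (hX : ∀ i : ℤ, ∑' k : ℕ, s (i - (k + 1)) * (β⁻¹) ^ (k + 1) < 1) :
    IsGreedyBetaExpansion β (fun k => s (-(k + 1 : ℕ))) := by
  refine .of_binary hβ (fun k => h01 _) fun n => ?_
  have hidx (k : ℕ) : (-(k + n + 1 + 1 : ℕ) : ℤ) = -(n + 1 : ℕ) - (k + 1) := by
    push_cast; ring
  simpa only [betaValue, hidx] using hX (-(n + 1 : ℕ))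

theorem stmt3_general (β : ℝ) (hβ : 1 < β)
    (s t : ℤ → ℝ)
    (hs01 : ∀ k, s k = 0 ∨ s k = 1) (ht01 : ∀ k, t k = 0 ∨ t k = 1)
    (hsX : ∀ i : ℤ, ∑' k : ℕ, s (i - (k + 1)) * (β⁻¹) ^ (k + 1) < 1)
    (htX : ∀ i : ℤ, ∑' k : ℕ, t (i - (k + 1)) * (β⁻¹) ^ (k + 1) < 1)
    (heq : ∑' k : ℕ, s (-(k + 1 : ℕ)) * (β⁻¹) ^ (k + 1)
         = ∑' k : ℕ, t (-(k + 1 : ℕ)) * (β⁻¹) ^ (k + 1)) :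
    ∀ k : ℕ, s (-(k + 1 : ℕ)) = t (-(k + 1 : ℕ)) :=
  congrFun <| (isGreedyBetaExpansion_of_betaShift hβ hs01 hsX).eq_of_betaValue_eq
    (by positivity)
    (isGreedyBetaExpansion_of_betaShift hβ ht01 htX) heq

/-- Uniqueness of β-expansions within the β-shift: for `β ∈ (1,2)`, if two sequences
in `X_β` have the same value `∑_{k≥1} s_{-k} β^{-k}`, then `s_{-k} = t_{-k}` for all `k ≥ 1`. -/
theorem stmt3 (β : ℝ) (hβ : 1 < β) (hβ2 : β < 2)
    (s t : ℤ → ℝ)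
    (hs01 : ∀ k, s k = 0 ∨ s k = 1) (ht01 : ∀ k, t k = 0 ∨ t k = 1)
    (hsX : ∀ i : ℤ, ∑' k : ℕ, s (i - (k + 1)) * (β⁻¹) ^ (k + 1) < 1)
    (htX : ∀ i : ℤ, ∑' k : ℕ, t (i - (k + 1)) * (β⁻¹) ^ (k + 1) < 1)
    (heq : ∑' k : ℕ, s (-(k + 1 : ℕ)) * (β⁻¹) ^ (k + 1)
         = ∑' k : ℕ, t (-(k + 1 : ℕ)) * (β⁻¹) ^ (k + 1)) :
    ∀ k : ℕ, s (-(k + 1 : ℕ)) = t (-(k + 1 : ℕ)) :=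
  stmt3_general β hβ s t hs01 ht01 hsX htX heq
end

section
/- The coding map π conjugates the skew map f with the shift σ on X̄_β^⋆: for every sequence (s_k) ∈ X̄_β^⋆, f(π((s_k))) = π(σ((s_k))), where σ((s_k)) = (s_{k-1}). -/
/-- value in `{0,1} ⊆ ℝ` of a boolean. -/
noncomputable def bval (b : Bool) : ℝ := if b then 1 else 0

/-- The closed two-sided β-shift inside `{0,1}^ℤ`. -/
def XbarBeta (β : ℝ) : Set (ℤ → Bool) :=
  {s | ∀ i : ℤ, ∑' k : ℕ, bval (s (i - (k + 1))) * (β⁻¹) ^ (k + 1) ≤ 1}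

/-- `X̄_β^⋆`: the closed β-shift minus sequences having a left tail of zeros. -/
def XbarBetaStar (β : ℝ) : Set (ℤ → Bool) :=
  XbarBeta β \ {s | ∃ i : ℤ, ∀ j : ℤ, j ≤ i → s j = false}

/-- The coding map `π(s) = (∑_{k≥1} s_{-k} β^{-k}, ∑_{k≥0} s_k (1-τ) τ^k)`. -/
noncomputable def codingMap (β τ : ℝ) (s : ℤ → Bool) : ℝ × ℝ :=
  (∑' k : ℕ, bval (s (-(k + 1 : ℕ))) * (β⁻¹) ^ (k + 1),
   ∑' k : ℕ, bval (s (k : ℤ)) * ((1 - τ) * τ ^ k))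

/-- The skew map `f` on `[0,1]²`. -/
noncomputable def skewMap (β τ : ℝ) (p : ℝ × ℝ) : ℝ × ℝ :=
  if p.1 ≤ β⁻¹ then (β * p.1, τ * p.2) else (β * p.1 - 1, τ * p.2 + (1 - τ))

/-- The two-sided shift `σ((s_k)) = (s_{k-1})`. -/
def shiftσ (s : ℤ → Bool) : ℤ → Bool := fun k => s (k - 1)

/-!
Reading off the digit `s₋₁` splits both coordinates of `π(s)` as a geometric series:
`π(s)₁ = β⁻¹ (s₋₁ + π(σ s)₁)` and `π(σ s)₂ = s₋₁ (1 - τ) + τ π(s)₂`. Since `π(σ s)₁` lies in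
`(0, 1]` (the admissibility condition at `i = -1` bounds it by `1`, and a digit `1` to the left
of `-1` makes it positive), `π(s)₁ ≤ β⁻¹` holds exactly when `s₋₁ = 0`, so the branch of `f`
chosen at `π(s)` is the one that undoes the digit `s₋₁`.
-/

@[simp] lemma bval_true : bval true = 1 := rfl

@[simp] lemma bval_false : bval false = 0 := rfl

lemma bval_nonneg (b : Bool) : 0 ≤ bval b := by cases b <;> simp

lemma bval_le_one (b : Bool) : bval b ≤ 1 := by cases b <;> simp

section DigitSeries

variable {u : ℕ → ℝ}

lemma summable_bval_mul (d : ℕ → Bool) (hu : Summable u) (hu0 : ∀ k, 0 ≤ u k) :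
    Summable fun k => bval (d k) * u k :=
  Summable.of_nonneg_of_le (fun k => mul_nonneg (bval_nonneg _) (hu0 k))
    (fun k => mul_le_of_le_one_left (hu0 k) (bval_le_one _)) hu

lemma tsum_bval_mul_eq_head_add (d : ℕ → Bool) {r : ℝ} (hu : Summable u)
    (hu0 : ∀ k, 0 ≤ u k) (hr : ∀ k, u (k + 1) = r * u k) :
    ∑' k, bval (d k) * u k = bval (d 0) * u 0 + r * ∑' k, bval (d (k + 1)) * u k := by
  rw [(summable_bval_mul d hu hu0).tsum_eq_zero_add, ← tsum_mul_left]
  congr 1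
  exact tsum_congr fun k => by rw [hr]; ring

lemma tsum_bval_mul_pos (d : ℕ → Bool) (hu : Summable u) (hu0 : ∀ k, 0 < u k) {k : ℕ}
    (hk : d k = true) : 0 < ∑' k, bval (d k) * u k :=
  (summable_bval_mul d hu fun k => (hu0 k).le).tsum_pos
    (fun k => mul_nonneg (bval_nonneg _) (hu0 k).le) k (by simpa [hk] using hu0 k)

end DigitSeries

lemma summable_inv_pow_succ {β : ℝ} (hβ : 1 < β) : Summable fun k : ℕ => β⁻¹ ^ (k + 1) :=
  (summable_nat_add_iff 1).2 <|
    summable_geometric_of_lt_one (inv_nonneg.2 (by linarith)) (inv_lt_one_of_one_lt₀ hβ)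

lemma shiftσ_neg_natCast_succ (s : ℤ → Bool) (k : ℕ) :
    shiftσ s (-((k + 1 : ℕ) : ℤ)) = s (-((k + 1 + 1 : ℕ) : ℤ)) :=
  congrArg s (by push_cast; ring)

lemma codingMap_fst_eq {β : ℝ} (τ : ℝ) (hβ : 1 < β) (s : ℤ → Bool) :
    (codingMap β τ s).1 = bval (s (-1)) * β⁻¹ + β⁻¹ * (codingMap β τ (shiftσ s)).1 := by
  have h := tsum_bval_mul_eq_head_add (fun k => s (-((k + 1 : ℕ) : ℤ))) (summable_inv_pow_succ hβ)
    (fun k => pow_nonneg (inv_nonneg.2 (by linarith)) _) (fun k => pow_succ' _ _)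
  simpa only [codingMap, shiftσ_neg_natCast_succ, zero_add, Nat.cast_one, pow_one] using h

lemma codingMap_shiftσ_snd_eq (β : ℝ) {τ : ℝ} (hτ0 : 0 ≤ τ) (hτ1 : τ < 1) (s : ℤ → Bool) :
    (codingMap β τ (shiftσ s)).2 = bval (s (-1)) * (1 - τ) + τ * (codingMap β τ s).2 := by
  have h := tsum_bval_mul_eq_head_add (fun k => shiftσ s (k : ℤ))
    ((summable_geometric_of_lt_one hτ0 hτ1).mul_left (1 - τ))
    (fun k => mul_nonneg (by linarith) (pow_nonneg hτ0 _)) (fun k => by ring)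
  simpa only [codingMap, shiftσ, Nat.cast_zero, zero_sub, Nat.cast_succ, add_sub_cancel_right,
    pow_zero, mul_one] using h

lemma codingMap_shiftσ_fst_le_one {β : ℝ} (τ : ℝ) {s : ℤ → Bool} (hs : s ∈ XbarBeta β) :
    (codingMap β τ (shiftσ s)).1 ≤ 1 := by
  convert hs (-1) using 1
  exact tsum_congr fun k => congrArg (fun b => bval b * β⁻¹ ^ (k + 1)) <|
    congrArg s (by push_cast; ring)

lemma codingMap_shiftσ_fst_pos {β : ℝ} (τ : ℝ) (hβ : 1 < β) {s : ℤ → Bool}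
    (hs : ∀ i, ∃ j ≤ i, s j = true) : 0 < (codingMap β τ (shiftσ s)).1 := by
  obtain ⟨j, hj, hsj⟩ := hs (-2)
  obtain ⟨n, hn⟩ := Int.le.dest hj
  refine tsum_bval_mul_pos (fun k => shiftσ s (-((k + 1 : ℕ) : ℤ))) (summable_inv_pow_succ hβ)
    (fun k => pow_pos (inv_pos.2 (by linarith)) _) (k := n) ?_
  simp only [shiftσ]
  convert hsj using 2
  push_cast
  omega

lemma exists_le_eq_true_of_mem_XbarBetaStar {β : ℝ} {s : ℤ → Bool} (hs : s ∈ XbarBetaStar β)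
    (i : ℤ) : ∃ j ≤ i, s j = true := by
  by_contra! h
  exact hs.2 ⟨i, fun j hj => Bool.eq_false_iff.2 (h j hj)⟩

lemma skewMap_bval_mul_inv_add {β : ℝ} (τ : ℝ) (hβ : 0 < β) (b : Bool) {t : ℝ} (ht0 : 0 < t)
    (ht1 : t ≤ 1) (y : ℝ) :
    skewMap β τ (bval b * β⁻¹ + β⁻¹ * t, y) = (t, bval b * (1 - τ) + τ * y) := by
  have hβinv : 0 < β⁻¹ := inv_pos.2 hβ
  cases b with
  | false =>
    have hle : 0 * β⁻¹ + β⁻¹ * t ≤ β⁻¹ := by nlinarith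
    rw [skewMap, bval_false, if_pos hle]
    exact Prod.ext (by field_simp; ring) (by ring)
  | true =>
    have hlt : ¬ 1 * β⁻¹ + β⁻¹ * t ≤ β⁻¹ := by nlinarith
    rw [skewMap, bval_true, if_neg hlt]
    exact Prod.ext (by field_simp; ring) (by ring)

theorem stmt5_general (β τ : ℝ) (hβ : 1 < β) (hτ0 : 0 < τ) (hτ : τ < 1 / 2)
    (s : ℤ → Bool) (hs : s ∈ XbarBetaStar β) :
    skewMap β τ (codingMap β τ s) = codingMap β τ (shiftσ s) := by
  have hpos := codingMap_shiftσ_fst_pos τ hβ (exists_le_eq_true_of_mem_XbarBetaStar hs)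
  have hle := codingMap_shiftσ_fst_le_one τ hs.1
  rw [← Prod.mk.eta (p := codingMap β τ s), codingMap_fst_eq τ hβ s,
    skewMap_bval_mul_inv_add τ (by linarith) (s (-1)) hpos hle,
    ← codingMap_shiftσ_snd_eq β hτ0.le (by linarith) s]

/-- The coding map conjugates `f` with the shift on `X̄_β^⋆`:
`f(π(s)) = π(σ(s))` for all `s ∈ X̄_β^⋆`. -/
theorem stmt5 (β τ : ℝ) (hβ : 1 < β) (hβ2 : β < 2) (hτ0 : 0 < τ) (hτ : τ < 1 / 2)
    (s : ℤ → Bool) (hs : s ∈ XbarBetaStar β) :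
    skewMap β τ (codingMap β τ s) = codingMap β τ (shiftσ s) :=
  stmt5_general β τ hβ hτ0 hτ s hs
end

section
/- The dynamical system (Λ_{β,τ}, f) is topologically mixing: for any nonempty open subsets A, B of Λ_{β,τ} there exists N ∈ ℕ such that f^n(A) ∩ B ≠ ∅ for all n > N. -/
open Set

/-- The attractor `Λ_{β,τ} = closure(⋂_{i≥0} f^i([0,1]²))`. -/
noncomputable def attractor (β τ : ℝ) : Set (ℝ × ℝ) :=
  closure (⋂ i : ℕ, (skewMap β τ)^[i] '' (Icc (0:ℝ) 1 ×ˢ Icc (0:ℝ) 1))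

/-!
The first coordinate of `skewMap` is the β-transformation, which expands any interval until an
iterate covers `(0,1]`; the second coordinate contracts by `τ`. A point `a` of
`⋂ f^i([0,1]²)` can be slid to the left: shifting the start of an orbit ending at `a` and moving
it to the bottom edge (which lies in the set) gives points of the set with any first coordinate in
an interval to the left of `a`, at height within `τ^n` of `a`. After `k` further steps the first
coordinates of these points cover `(0,1]`, and a point with a suitable first coordinate is then
mapped within `τ^m` of any prescribed `b` in `m` more steps. Points with first coordinate `0` are
the origin, which is approximated by the bottom edge.
-/

open Filter Topology

section Iterate

variable {α : Type*} {f : α → α}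

lemma Set.subset_iterate_succ_image {s t u : Set α} {k : ℕ} (hs : s ⊆ f^[k] '' t)
    (ht : t ⊆ f '' u) : s ⊆ f^[k + 1] '' u := by
  rw [Function.iterate_succ, image_comp]
  exact hs.trans (image_mono ht)

lemma Set.subset_iterate_image_of_subset_image {s : Set α} (h : s ⊆ f '' s) (n : ℕ) :
    s ⊆ f^[n] '' s := by
  induction n with
  | zero => simp
  | succ n ih => exact subset_iterate_succ_image ih h

lemma Set.eventually_subset_iterate_image {s t : Set α} (hs : s ⊆ f '' s) {k : ℕ}
    (hk : s ⊆ f^[k] '' t) : ∀ᶠ n in atTop, s ⊆ f^[n] '' t := by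
  filter_upwards [eventually_ge_atTop k] with n hn
  obtain ⟨m, rfl⟩ := Nat.exists_eq_add_of_le' hn
  rw [Function.iterate_add, image_comp]
  exact (subset_iterate_image_of_subset_image hs m).trans (image_mono hk)

lemma Set.MapsTo.iInter_iterate_image {s : Set α} (h : MapsTo f s s) :
    MapsTo f (⋂ i : ℕ, f^[i] '' s) (⋂ i : ℕ, f^[i] '' s) := by
  intro x hx
  refine mem_iInter.2 fun i => ?_
  cases i with
  | zero => simpa using h (by simpa using mem_iInter.1 hx 0)
  | succ i =>
    obtain ⟨y, hy, rfl⟩ := mem_iInter.1 hx i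
    exact ⟨y, hy, Function.iterate_succ_apply' f i y⟩

lemma Set.subset_iInter_iterate_image {s t : Set α} (hst : s ⊆ t) (hs : s ⊆ f '' s) :
    s ⊆ ⋂ i : ℕ, f^[i] '' t :=
  subset_iInter fun i => (subset_iterate_image_of_subset_image hs i).trans (image_mono hst)

end Iterate

noncomputable def betaMap (β x : ℝ) : ℝ := if x ≤ β⁻¹ then β * x else β * x - 1

section BetaMap

variable {β : ℝ}

lemma Ioc_mul_subset_image_betaMap (hβ : 0 < β) {l r : ℝ} (hr : r ≤ β⁻¹) :
    Ioc (β * l) (β * r) ⊆ betaMap β '' Ioc l r := by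
  rintro y ⟨hly, hyr⟩
  have hy : y / β ≤ r := by rw [div_le_iff₀ hβ]; linarith
  refine ⟨y / β, ⟨by rw [lt_div_iff₀ hβ]; linarith, hy⟩, ?_⟩
  rw [betaMap, if_pos (hy.trans hr)]
  field_simp

lemma Ioc_mul_sub_one_subset_image_betaMap (hβ : 0 < β) {l r : ℝ} (hl : β⁻¹ ≤ l) :
    Ioc (β * l - 1) (β * r - 1) ⊆ betaMap β '' Ioc l r := by
  rintro y ⟨hly, hyr⟩
  have hy : l < (y + 1) / β := by rw [lt_div_iff₀ hβ]; linarith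
  refine ⟨(y + 1) / β, ⟨hy, by rw [div_le_iff₀ hβ]; linarith⟩, ?_⟩
  rw [betaMap, if_neg (hl.trans_lt hy).not_ge]
  field_simp
  ring

lemma Ioc_zero_one_subset_image_betaMap (hβ : 0 < β) {s : ℝ} (hs : β⁻¹ ≤ s) :
    Ioc 0 1 ⊆ betaMap β '' Ioc 0 s := by
  have h := Ioc_mul_subset_image_betaMap hβ (l := 0) le_rfl
  rw [mul_zero, mul_inv_cancel₀ hβ.ne'] at h
  exact h.trans (image_mono (Ioc_subset_Ioc_right hs))

lemma exists_Ioc_zero_one_subset_iterate_image_Ioc_zero (hβ : 1 < β) (n : ℕ) {s : ℝ}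
    (hs : 0 < s) (hn : 1 < β ^ n * s) : ∃ k, Ioc 0 1 ⊆ (betaMap β)^[k] '' Ioc 0 s := by
  have hβ0 : 0 < β := one_pos.trans hβ
  induction n generalizing s with
  | zero =>
    rw [pow_zero, one_mul] at hn
    exact ⟨1, Ioc_zero_one_subset_image_betaMap hβ0 (by linarith [inv_lt_one_of_one_lt₀ hβ])⟩
  | succ n ih =>
    rcases le_or_gt β⁻¹ s with hsβ | hsβ
    · exact ⟨1, Ioc_zero_one_subset_image_betaMap hβ0 hsβ⟩
    · obtain ⟨k, hk⟩ := ih (s := β * s) (by positivity) (by rwa [pow_succ, mul_assoc] at hn)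
      refine ⟨k + 1, subset_iterate_succ_image hk ?_⟩
      simpa using Ioc_mul_subset_image_betaMap hβ0 (l := 0) hsβ.le

lemma exists_Ioc_zero_one_subset_iterate_image_Ioc (hβ : 1 < β) (hβ2 : β ≤ 2) (n : ℕ)
    {l r : ℝ} (hl : 0 ≤ l) (hlr : l < r) (hr : r ≤ 1) (hn : 1 < β ^ n * (r - l)) :
    ∃ k, Ioc 0 1 ⊆ (betaMap β)^[k] '' Ioc l r := by
  have hβ0 : 0 < β := one_pos.trans hβ
  induction n generalizing l r with
  | zero => rw [pow_zero, one_mul] at hn; linarith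
  | succ n ih =>
    have expand : ∀ l' r', Ioc l' r' ⊆ betaMap β '' Ioc l r → 0 ≤ l' → r' ≤ 1 →
        r' - l' = β * (r - l) → ∃ k, Ioc 0 1 ⊆ (betaMap β)^[k] '' Ioc l r := by
      intro l' r' hsub hl' hr' hlen
      obtain ⟨k, hk⟩ := ih hl' (by nlinarith) hr' (by rwa [hlen, ← mul_assoc, ← pow_succ])
      exact ⟨k + 1, subset_iterate_succ_image hk hsub⟩
    have hββ : β * β⁻¹ = 1 := mul_inv_cancel₀ hβ0.ne'
    rcases le_or_gt r β⁻¹ with hrβ | hβr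
    · exact expand _ _ (Ioc_mul_subset_image_betaMap hβ0 hrβ) (by positivity)
        (by nlinarith) (by ring)
    rcases le_or_gt β⁻¹ l with hβl | hlβ
    · exact expand _ _ (Ioc_mul_sub_one_subset_image_betaMap hβ0 hβl) (by nlinarith)
        (by nlinarith) (by ring)
    -- `Ioc l r` straddles the discontinuity, so its image contains an interval `Ioc 0 s`.
    have hsub : Ioc 0 (β * r - 1) ⊆ betaMap β '' Ioc l r := by
      have h := Ioc_mul_sub_one_subset_image_betaMap hβ0 (r := r) le_rfl
      rw [hββ, sub_self] at h
      exact h.trans (image_mono (Ioc_subset_Ioc_left hlβ.le))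
    have hs : 0 < β * r - 1 := by nlinarith
    obtain ⟨m, hm⟩ := pow_unbounded_of_one_lt (β * r - 1)⁻¹ hβ
    obtain ⟨k, hk⟩ := exists_Ioc_zero_one_subset_iterate_image_Ioc_zero hβ m hs
      ((inv_lt_iff_one_lt_mul₀ hs).1 hm)
    exact ⟨k + 1, subset_iterate_succ_image hk hsub⟩

lemma eventually_Ioc_zero_one_subset_iterate_image_Ioc (hβ : 1 < β) (hβ2 : β ≤ 2) {l r : ℝ}
    (hl : 0 ≤ l) (hlr : l < r) (hr : r ≤ 1) :
    ∀ᶠ k in atTop, Ioc 0 1 ⊆ (betaMap β)^[k] '' Ioc l r := by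
  obtain ⟨n, hn⟩ := pow_unbounded_of_one_lt (r - l)⁻¹ hβ
  obtain ⟨k, hk⟩ := exists_Ioc_zero_one_subset_iterate_image_Ioc hβ hβ2 n hl hlr hr
    ((inv_lt_iff_one_lt_mul₀ (sub_pos.2 hlr)).1 hn)
  exact eventually_subset_iterate_image
    (Ioc_zero_one_subset_image_betaMap (one_pos.trans hβ) (inv_le_one_of_one_le₀ hβ.le)) hk

end BetaMap

noncomputable def skewCore (β τ : ℝ) : Set (ℝ × ℝ) :=
  ⋂ i : ℕ, (skewMap β τ)^[i] '' (Icc (0:ℝ) 1 ×ˢ Icc (0:ℝ) 1)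

section SkewMap

variable {β τ : ℝ}

lemma fst_skewMap (p : ℝ × ℝ) : (skewMap β τ p).1 = betaMap β p.1 := by
  unfold skewMap betaMap
  split_ifs <;> rfl

lemma fst_iterate_skewMap (n : ℕ) (p : ℝ × ℝ) :
    ((skewMap β τ)^[n] p).1 = (betaMap β)^[n] p.1 :=
  Function.Semiconj.iterate_right (f := Prod.fst) fst_skewMap n p

lemma mapsTo_skewMap_unitSquare (hβ : 0 < β) (hβ2 : β ≤ 2) (hτ0 : 0 ≤ τ) (hτ1 : τ ≤ 1) :
    MapsTo (skewMap β τ) (Icc 0 1 ×ˢ Icc 0 1) (Icc 0 1 ×ˢ Icc 0 1) := by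
  rintro ⟨x, y⟩ ⟨⟨hx0, hx1⟩, hy0, hy1⟩
  have hββ : β * β⁻¹ = 1 := mul_inv_cancel₀ hβ.ne'
  unfold skewMap
  split_ifs with hx
  · exact ⟨⟨by positivity, by nlinarith⟩, by positivity, by nlinarith⟩
  · exact ⟨⟨by nlinarith, by nlinarith⟩, by nlinarith, by nlinarith⟩

lemma mapsTo_skewMap_skewCore (hβ : 0 < β) (hβ2 : β ≤ 2) (hτ0 : 0 ≤ τ) (hτ1 : τ ≤ 1) :
    MapsTo (skewMap β τ) (skewCore β τ) (skewCore β τ) :=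
  (mapsTo_skewMap_unitSquare hβ hβ2 hτ0 hτ1).iInter_iterate_image

lemma skewCore_subset_unitSquare : skewCore β τ ⊆ Icc 0 1 ×ˢ Icc 0 1 := fun _ hp => by
  simpa using mem_iInter.1 hp 0

lemma Icc_prod_zero_subset_skewCore (hβ : 1 ≤ β) :
    Icc (0:ℝ) 1 ×ˢ {0} ⊆ skewCore β τ := by
  refine subset_iInter_iterate_image (prod_mono le_rfl (by simp)) ?_
  rintro ⟨x, y⟩ ⟨⟨hx0, hx1⟩, rfl⟩
  have hβ0 : 0 < β := one_pos.trans_le hβ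
  have hxβ : x / β ≤ β⁻¹ := by rw [div_eq_mul_inv]; exact mul_le_of_le_one_left (by positivity) hx1
  refine ⟨(x / β, 0), ⟨⟨by positivity, hxβ.trans (inv_le_one_of_one_le₀ hβ)⟩, rfl⟩, ?_⟩
  rw [skewMap, if_pos hxβ, mul_div_cancel₀ _ hβ0.ne', mul_zero]

lemma skewMap_sub_fst (hβ : 0 < β) {p : ℝ × ℝ} {d : ℝ} (hd : 0 ≤ d) (y : ℝ)
    (h : β * d < (skewMap β τ p).1) :
    0 < p.1 - d ∧ skewMap β τ (p.1 - d, y) =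
      ((skewMap β τ p).1 - β * d, (skewMap β τ p).2 + τ * (y - p.2)) := by
  have hββ : β * β⁻¹ = 1 := mul_inv_cancel₀ hβ.ne'
  by_cases hp : p.1 ≤ β⁻¹
  · rw [skewMap, if_pos hp] at h
    have hpd : p.1 - d ≤ β⁻¹ := by linarith
    refine ⟨by nlinarith, ?_⟩
    simp only [skewMap, if_pos hp, if_pos hpd]
    ext <;> ring
  · rw [skewMap, if_neg hp] at h
    have hpd : ¬p.1 - d ≤ β⁻¹ := fun hpd => by nlinarith
    refine ⟨by nlinarith, ?_⟩
    simp only [skewMap, if_neg hp, if_neg hpd]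
    ext <;> ring

/-- The shifted orbit follows the same branches as the original one for as long as its first
coordinate stays positive, so the horizontal gap grows by `β` and the vertical one shrinks by `τ`
at every step. -/
lemma iterate_skewMap_sub_fst (hβ : 0 < β) (n : ℕ) {p : ℝ × ℝ} {d : ℝ} (hd : 0 ≤ d) (y : ℝ)
    (h : β ^ n * d < ((skewMap β τ)^[n] p).1) :
    0 < p.1 - d ∧ (skewMap β τ)^[n] (p.1 - d, y) =
      (((skewMap β τ)^[n] p).1 - β ^ n * d, ((skewMap β τ)^[n] p).2 + τ ^ n * (y - p.2)) := by
  induction n generalizing p d y with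
  | zero => simpa using h
  | succ n ih =>
    simp only [Function.iterate_succ_apply] at h ⊢
    obtain ⟨hpos, hiter⟩ := ih (p := skewMap β τ p) (d := β * d) (by positivity)
      ((skewMap β τ p).2 + τ * (y - p.2)) (by rwa [← mul_assoc, ← pow_succ])
    obtain ⟨hpos', hstep⟩ := skewMap_sub_fst hβ hd y (sub_pos.1 hpos)
    refine ⟨hpos', ?_⟩
    rw [hstep, hiter]
    ext <;> simp only [pow_succ] <;> ring

lemma snd_iterate_skewMap_of_fst_eq_zero (hβ : 0 < β) (n : ℕ) {p : ℝ × ℝ}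
    (h : ((skewMap β τ)^[n] p).1 = 0) : ((skewMap β τ)^[n] p).2 = τ ^ n * p.2 := by
  induction n with
  | zero => simp
  | succ n ih =>
    rw [Function.iterate_succ_apply'] at h ⊢
    set q := (skewMap β τ)^[n] p
    have hq : q.1 ≤ β⁻¹ := by
      by_contra hq
      rw [skewMap, if_neg hq] at h
      have hββ : β * β⁻¹ = 1 := mul_inv_cancel₀ hβ.ne'
      nlinarith
    rw [skewMap, if_pos hq] at h ⊢
    rw [ih ((mul_eq_zero.1 h).resolve_left hβ.ne'), pow_succ]
    ring

lemma snd_eq_zero_of_mem_skewCore (hβ : 0 < β) (hτ0 : 0 ≤ τ) (hτ1 : τ < 1) {a : ℝ × ℝ}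
    (ha : a ∈ skewCore β τ) (h : a.1 = 0) : a.2 = 0 := by
  have hle : ∀ n, a.2 ≤ τ ^ n := by
    intro n
    obtain ⟨q, hq, rfl⟩ := mem_iInter.1 ha n
    rw [snd_iterate_skewMap_of_fst_eq_zero hβ n h]
    exact mul_le_of_le_one_right (pow_nonneg hτ0 n) hq.2.2
  exact le_antisymm (ge_of_tendsto' (tendsto_pow_atTop_nhds_zero_of_lt_one hτ0 hτ1) hle)
    (skewCore_subset_unitSquare ha).2.1

lemma skewCore_subset_closure_fst_pos (hβ : 1 < β) (hτ0 : 0 ≤ τ) (hτ1 : τ < 1) :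
    skewCore β τ ⊆ closure (skewCore β τ ∩ {p | 0 < p.1}) := by
  intro a ha
  rcases (skewCore_subset_unitSquare ha).1.1.eq_or_lt with h | h
  · obtain rfl : a = (0, 0) :=
      Prod.ext h.symm (snd_eq_zero_of_mem_skewCore (one_pos.trans hβ) hτ0 hτ1 ha h.symm)
    refine mem_closure_of_tendsto (f := fun t : ℝ => (t, (0:ℝ))) (b := 𝓝[>] 0) ?_ ?_
    · exact ((continuous_id.prodMk continuous_const).tendsto' 0 (0, 0) rfl).mono_left
        nhdsWithin_le_nhds
    · filter_upwards [Ioc_mem_nhdsGT zero_lt_one] with t ht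
      exact ⟨Icc_prod_zero_subset_skewCore hβ.le ⟨Ioc_subset_Icc_self ht, rfl⟩, ht.1⟩
  · exact subset_closure ⟨ha, h⟩

lemma exists_mem_skewCore_fst_eq_dist_lt (hβ : 1 < β) (hβ2 : β ≤ 2) (hτ0 : 0 ≤ τ) (hτ1 : τ < 1)
    {a : ℝ × ℝ} (ha : a ∈ skewCore β τ) {x ε : ℝ} (hx : 0 < x) (hxa : x ≤ a.1)
    (hax : a.1 - ε < x) : ∃ p ∈ skewCore β τ, p.1 = x ∧ dist p a < ε := by
  have hβ0 : 0 < β := one_pos.trans hβ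
  obtain ⟨n, hn⟩ := exists_pow_lt_of_lt_one (by linarith : 0 < ε) hτ1
  obtain ⟨q, hq, rfl⟩ := mem_iInter.1 ha n
  set d := (((skewMap β τ)^[n] q).1 - x) / β ^ n
  have hd : 0 ≤ d := div_nonneg (by linarith) (by positivity)
  have hβd : β ^ n * d = ((skewMap β τ)^[n] q).1 - x := mul_div_cancel₀ _ (by positivity)
  obtain ⟨hpos, hiter⟩ := iterate_skewMap_sub_fst hβ0 n hd 0 (by linarith)
  have hstart : (q.1 - d, (0:ℝ)) ∈ skewCore β τ :=
    Icc_prod_zero_subset_skewCore hβ.le ⟨⟨hpos.le, by linarith [hq.1.2]⟩, rfl⟩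
  refine ⟨_, (mapsTo_skewMap_skewCore hβ0 hβ2 hτ0 hτ1.le).iterate n hstart, ?_, ?_⟩
  · rw [hiter, hβd]
    ring
  · rw [hiter, hβd, Prod.dist_eq, Real.dist_eq, Real.dist_eq]
    refine max_lt (by rw [abs_lt]; constructor <;> linarith) ?_
    have hτn : τ ^ n * q.2 ≤ τ ^ n := mul_le_of_le_one_right (pow_nonneg hτ0 n) hq.2.2
    rw [abs_lt]
    constructor <;> nlinarith [pow_nonneg hτ0 n, hq.2.1]

lemma exists_fst_eq_imp_dist_iterate_lt (hβ : 0 < β) (hτ0 : 0 ≤ τ) (hτ1 : τ < 1) {b : ℝ × ℝ}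
    (hb : b ∈ skewCore β τ) (hb1 : 0 < b.1) {ε : ℝ} (hε : 0 < ε) :
    ∃ w ∈ Ioc (0:ℝ) 1, ∃ m, ∀ z ∈ Icc (0:ℝ) 1 ×ˢ Icc (0:ℝ) 1, z.1 = w →
      dist ((skewMap β τ)^[m] z) b < ε := by
  obtain ⟨m, hm⟩ := exists_pow_lt_of_lt_one hε hτ1
  obtain ⟨q, hq, rfl⟩ := mem_iInter.1 hb m
  have hshift := fun y => iterate_skewMap_sub_fst hβ m (p := q) le_rfl y (by simpa using hb1)
  refine ⟨q.1, ⟨by simpa using (hshift 0).1, hq.1.2⟩, m, fun z hz hzq => ?_⟩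
  have hz' : z = (q.1 - 0, z.2) := by ext <;> simp [hzq]
  have hdist : |z.2 - q.2| ≤ 1 := Real.dist_eq _ _ ▸ Real.dist_le_of_mem_Icc_01 hz.2 hq.2
  rw [hz', (hshift z.2).2, Prod.dist_eq, mul_zero, sub_zero, dist_self, max_eq_right dist_nonneg]
  simp only [Real.dist_eq, add_sub_cancel_left, abs_mul, abs_pow, abs_of_nonneg hτ0]
  calc τ ^ m * |z.2 - q.2| ≤ τ ^ m * 1 := mul_le_mul_of_nonneg_left hdist (pow_nonneg hτ0 m)
    _ < ε := by rwa [mul_one]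

lemma eventually_exists_mem_skewCore_dist_lt (hβ : 1 < β) (hβ2 : β ≤ 2) (hτ0 : 0 ≤ τ)
    (hτ1 : τ < 1) {a b : ℝ × ℝ} (ha : a ∈ skewCore β τ) (hb : b ∈ skewCore β τ)
    (ha1 : 0 < a.1) (hb1 : 0 < b.1) {ε : ℝ} (hε : 0 < ε) :
    ∀ᶠ n in atTop, ∃ p ∈ skewCore β τ, dist p a < ε ∧ dist ((skewMap β τ)^[n] p) b < ε := by
  obtain ⟨w, hw, m, hm⟩ := exists_fst_eq_imp_dist_iterate_lt (one_pos.trans hβ) hτ0 hτ1 hb hb1 hε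
  have hexpand := eventually_Ioc_zero_one_subset_iterate_image_Ioc hβ hβ2 (le_max_right _ 0)
    (max_lt (sub_lt_self _ hε) ha1) (skewCore_subset_unitSquare ha).1.2
  filter_upwards [(tendsto_sub_atTop_nat m).eventually hexpand, eventually_ge_atTop m]
    with n hn hmn
  obtain ⟨x, hx, hxw⟩ := hn hw
  obtain ⟨p, hp, hp1, hpa⟩ := exists_mem_skewCore_fst_eq_dist_lt hβ hβ2 hτ0 hτ1 ha
    ((le_max_right _ _).trans_lt hx.1) hx.2 ((le_max_left _ _).trans_lt hx.1)
  refine ⟨p, hp, hpa, ?_⟩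
  have hpn := (mapsTo_skewMap_skewCore (one_pos.trans hβ) hβ2 hτ0 hτ1.le).iterate (n - m) hp
  rw [← Nat.add_sub_cancel' hmn, Function.iterate_add_apply]
  exact hm _ (skewCore_subset_unitSquare hpn) (by rw [fst_iterate_skewMap, hp1, hxw])

lemma exists_mem_skewCore_ball_subset (hβ : 1 < β) (hτ0 : 0 ≤ τ) (hτ1 : τ < 1)
    {W : Set (ℝ × ℝ)} (hW : IsOpen W) (hne : (attractor β τ ∩ W).Nonempty) :
    ∃ c ∈ skewCore β τ, 0 < c.1 ∧ ∃ ε > 0, Metric.ball c ε ⊆ W := by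
  obtain ⟨c₀, hc₀, hc₀W⟩ := hne
  have hc₀' := closure_minimal (skewCore_subset_closure_fst_pos hβ hτ0 hτ1) isClosed_closure hc₀
  obtain ⟨c, hcW, hc, hc1⟩ := mem_closure_iff.1 hc₀' W hW hc₀W
  obtain ⟨ε, hε, hball⟩ := Metric.isOpen_iff.1 hW c hcW
  exact ⟨c, hc, hc1, ε, hε, hball⟩

end SkewMap

/-- The system `(Λ_{β,τ}, f)` is topologically mixing: for any nonempty sets
`A, B ⊆ Λ_{β,τ}` that are open in the subspace topology of the attractor,
there is `N` such that `f^n(A) ∩ B ≠ ∅` for all `n > N`. -/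
theorem stmt9 (β τ : ℝ) (hβ : 1 < β) (hβ2 : β < 2) (hτ0 : 0 < τ) (hτ : τ < 1 / 2)
    (A B : Set (ℝ × ℝ))
    (hA : ∃ U : Set (ℝ × ℝ), IsOpen U ∧ A = attractor β τ ∩ U)
    (hB : ∃ V : Set (ℝ × ℝ), IsOpen V ∧ B = attractor β τ ∩ V)
    (hAne : A.Nonempty) (hBne : B.Nonempty) :
    ∃ N : ℕ, ∀ n > N, ((skewMap β τ)^[n] '' A ∩ B).Nonempty := by
  obtain ⟨U, hU, rfl⟩ := hA
  obtain ⟨V, hV, rfl⟩ := hB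
  have hτ1 : τ < 1 := by linarith
  obtain ⟨a, ha, ha1, εa, hεa, haU⟩ := exists_mem_skewCore_ball_subset hβ hτ0.le hτ1 hU hAne
  obtain ⟨b, hb, hb1, εb, hεb, hbV⟩ := exists_mem_skewCore_ball_subset hβ hτ0.le hτ1 hV hBne
  obtain ⟨N, hN⟩ := eventually_atTop.1 <| eventually_exists_mem_skewCore_dist_lt hβ hβ2.le
    hτ0.le hτ1 ha hb ha1 hb1 (lt_min hεa hεb)
  refine ⟨N, fun n hn => ?_⟩
  obtain ⟨p, hp, hpa, hpb⟩ := hN n hn.le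
  have hpn := (mapsTo_skewMap_skewCore (one_pos.trans hβ) hβ2.le hτ0.le hτ1.le).iterate n hp
  exact ⟨_, ⟨p, ⟨subset_closure hp, haU (hpa.trans_le (min_le_left _ _))⟩, rfl⟩,
    subset_closure hpn, hbV (hpb.trans_le (min_le_right _ _))⟩
end

section
/- The topological entropy of the system (Λ_{β,τ}, f) equals log β. -/
open Dynamics Set

/-!
The first coordinate of `f` is the `β`-transformation `T x = β x mod 1`, and `f` contracts the
second coordinate by `τ`. Two points whose first coordinates have the same first `n` digits are,
for `n` steps, never further apart than `(Tⁿ x, y)` and `(Tⁿ x', y')`; so covering `[0,1]²` at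
scale `ε` costs a constant times the number of admissible digit words of length `n`, which is
`O(βⁿ)` because `Tⁿ` maps the cylinder of a word `w` into an interval `[0, L w]` and these lengths
sum to `βⁿ`. Conversely `[0,1] × {0} ⊆ Λ`, and on it points `β⁻ⁿ` apart are dynamically
`ε`-separated for `ε ≤ 1 / (1 + β)`: `T` stretches their distance by `β` until the branch point
separates them, and then their images jump at least `ε` apart.
-/

namespace Dynamics

open Finset

variable {X Y ι : Type*} [PseudoMetricSpace Y] {T : X → X} {F : Set X} {U : SetRel X X} {n : ℕ}

lemma coverMincard_le_card_mul_card (κ : X → ι) (φ : X → Y) (I : Finset ι) (G : Finset Y) {r : ℝ}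
    (hκ : ∀ x ∈ F, κ x ∈ I) (hG : ∀ x ∈ F, ∃ g ∈ G, dist (φ x) g < r)
    (hφ : ∀ x ∈ F, ∀ y ∈ F, κ x = κ y → dist (φ x) (φ y) < 2 * r →
      (x, y) ∈ dynEntourage T U n) :
    coverMincard T F U n ≤ (#I * #G : ℕ) := by
  classical
  rcases F.eq_empty_or_nonempty with rfl | ⟨x₀, -⟩
  · simp
  have hc : ∀ a : ι × Y, ∃ y, (∃ x ∈ F, κ x = a.1 ∧ dist (φ x) a.2 < r) →
      y ∈ F ∧ κ y = a.1 ∧ dist (φ y) a.2 < r := fun a =>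
    if h : ∃ x ∈ F, κ x = a.1 ∧ dist (φ x) a.2 < r then ⟨h.choose, fun _ => h.choose_spec⟩
    else ⟨x₀, fun h' => absurd h' h⟩
  choose c hc using hc
  refine (IsDynCoverOf.coverMincard_le_card (s := (I ×ˢ G).image c) fun x hx => ?_).trans ?_
  · obtain ⟨g, hg, hxg⟩ := hG x hx
    obtain ⟨hyF, hy, hyg⟩ := hc (κ x, g) ⟨x, hx, rfl, hxg⟩
    refine ⟨c (κ x, g), by simpa using ⟨_, _, ⟨hκ x hx, hg⟩, rfl⟩, hφ x hx _ hyF hy.symm ?_⟩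
    linarith [dist_triangle_right (φ x) (φ (c (κ x, g))) g]
  · exact_mod_cast card_image_le.trans (card_product I G).le

end Dynamics

namespace BetaExpansion

open Finset Function

variable {β : ℝ}

noncomputable def digit (β x : ℝ) : Bool := decide (β⁻¹ < x)

noncomputable def map (β x : ℝ) : ℝ := β * x - if digit β x then 1 else 0

lemma digit_eq_true_iff (hβ : 0 < β) {x : ℝ} : digit β x = true ↔ 1 < β * x := by
  rw [digit, decide_eq_true_iff, inv_lt_iff_one_lt_mul₀' hβ]

lemma digit_eq_false_iff (hβ : 0 < β) {x : ℝ} : digit β x = false ↔ β * x ≤ 1 := by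
  rw [← not_lt, ← digit_eq_true_iff hβ, Bool.not_eq_true]

lemma map_of_digit_eq_false {x : ℝ} (h : digit β x = false) : map β x = β * x := by
  simp [map, h]

lemma map_of_digit_eq_true {x : ℝ} (h : digit β x = true) : map β x = β * x - 1 := by
  simp [map, h]

lemma map_sub_map_of_digit_eq {x y : ℝ} (h : digit β x = digit β y) :
    map β x - map β y = β * (x - y) := by
  simp only [map, h]; ring

lemma iterate_map_sub_iterate_map {x y : ℝ} {n : ℕ}
    (h : ∀ k < n, digit β ((map β)^[k] x) = digit β ((map β)^[k] y)) :
    (map β)^[n] x - (map β)^[n] y = β ^ n * (x - y) := by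
  induction n with
  | zero => simp
  | succ n ih =>
    rw [iterate_succ_apply', iterate_succ_apply', map_sub_map_of_digit_eq (h n n.lt_succ_self),
      ih fun k hk => h k (hk.trans n.lt_succ_self)]
    ring

lemma mapsTo_map (hβ : 0 < β) (hβ2 : β ≤ 2) : MapsTo (map β) (Icc 0 1) (Icc 0 1) := by
  rintro x ⟨hx0, hx1⟩
  cases hd : digit β x
  · have := (digit_eq_false_iff hβ).1 hd
    rw [map_of_digit_eq_false hd]
    constructor <;> nlinarith
  · have := (digit_eq_true_iff hβ).1 hd
    rw [map_of_digit_eq_true hd]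
    constructor <;> nlinarith

noncomputable def word (β : ℝ) : ℕ → ℝ → List Bool
  | 0, _ => []
  | n + 1, x => digit β ((map β)^[n] x) :: word β n x

lemma digit_iterate_eq_of_word_eq {x y : ℝ} {n : ℕ} (h : word β n x = word β n y) :
    ∀ k < n, digit β ((map β)^[k] x) = digit β ((map β)^[k] y) := by
  induction n with
  | zero => simp
  | succ n ih =>
    obtain ⟨hd, hw⟩ := List.cons_eq_cons.1 h
    intro k hk
    rcases Nat.lt_succ_iff_lt_or_eq.1 hk with hk | rfl
    exacts [ih hw k hk, hd]

/-- `[0, cylinderBound β w]` contains the image under `(map β)^[n]` of the cylinder of `w`. -/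
noncomputable def cylinderBound (β : ℝ) : List Bool → ℝ
  | [] => 1
  | false :: w => min (β * cylinderBound β w) 1
  | true :: w => β * cylinderBound β w - 1

noncomputable def admissibleWords (β : ℝ) : ℕ → Finset (List Bool)
  | 0 => {[]}
  | n + 1 => (admissibleWords β n).image (List.cons false) ∪
      ((admissibleWords β n).filter (1 < β * cylinderBound β ·)).image (List.cons true)

lemma word_mem_admissibleWords (hβ : 0 < β) {x : ℝ} (hx : x ≤ 1) (n : ℕ) :
    word β n x ∈ admissibleWords β n ∧ (map β)^[n] x ≤ cylinderBound β (word β n x) := by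
  induction n with
  | zero => simpa [word, admissibleWords, cylinderBound] using hx
  | succ n ih =>
    obtain ⟨hw, hle⟩ := ih
    rw [iterate_succ_apply']
    cases hd : digit β ((map β)^[n] x)
    · have hy := (digit_eq_false_iff hβ).1 hd
      simp only [word, hd, admissibleWords, cylinderBound, map_of_digit_eq_false hd]
      simpa [hw] using And.intro (mul_le_mul_of_nonneg_left hle hβ.le) hy
    · have hy := (digit_eq_true_iff hβ).1 hd
      have hβy := mul_le_mul_of_nonneg_left hle hβ.le
      simp only [word, hd, admissibleWords, cylinderBound, map_of_digit_eq_true hd]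
      simpa [hw] using And.intro (hy.trans_le hβy) hβy

lemma cylinderBound_nonneg (hβ : 0 ≤ β) {n : ℕ} {w : List Bool} (hw : w ∈ admissibleWords β n) :
    0 ≤ cylinderBound β w := by
  induction n generalizing w with
  | zero => simp_all [admissibleWords, cylinderBound]
  | succ n ih =>
    simp only [admissibleWords, Finset.mem_union, Finset.mem_image, mem_filter] at hw
    rcases hw with ⟨v, hv, rfl⟩ | ⟨v, ⟨-, hv⟩, rfl⟩
    · exact le_min (mul_nonneg hβ (ih hv)) zero_le_one
    · simp only [cylinderBound]; linarith

lemma sum_cylinderBound (n : ℕ) : ∑ w ∈ admissibleWords β n, cylinderBound β w = β ^ n := by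
  induction n with
  | zero => simp [admissibleWords, cylinderBound]
  | succ n ih =>
    have hsplit (w : List Bool) : min (β * cylinderBound β w) 1 +
        (if 1 < β * cylinderBound β w then β * cylinderBound β w - 1 else 0) =
          β * cylinderBound β w := by
      split_ifs with h
      · rw [min_eq_right h.le]; ring
      · rw [min_eq_left (not_lt.1 h)]; ring
    rw [admissibleWords, sum_union (disjoint_left.2 (by simp)),
      sum_image (List.cons_injective.injOn), sum_image (List.cons_injective.injOn), sum_filter,
      ← sum_add_distrib]
    simp only [cylinderBound, hsplit, ← mul_sum, ih, pow_succ']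

lemma card_admissibleWords_succ_le (hβ : 0 ≤ β) (n : ℕ) :
    (#(admissibleWords β (n + 1)) : ℝ) ≤ #(admissibleWords β n) + β ^ (n + 1) := by
  set A := admissibleWords β n
  have hcard : #(admissibleWords β (n + 1)) ≤ #A + #(A.filter (1 < β * cylinderBound β ·)) :=
    (Finset.card_union_le _ _).trans (add_le_add card_image_le card_image_le)
  have hfilter : (#(A.filter (1 < β * cylinderBound β ·)) : ℝ) ≤ β ^ (n + 1) := calc
    _ = ∑ w ∈ A.filter (1 < β * cylinderBound β ·), (1 : ℝ) := by simp
    _ ≤ ∑ w ∈ A.filter (1 < β * cylinderBound β ·), β * cylinderBound β w :=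
      sum_le_sum fun w hw => (mem_filter.1 hw).2.le
    _ ≤ ∑ w ∈ A, β * cylinderBound β w := sum_le_sum_of_subset_of_nonneg (filter_subset _ _)
      fun w hw _ => mul_nonneg hβ (cylinderBound_nonneg hβ hw)
    _ = β ^ (n + 1) := by rw [← mul_sum, sum_cylinderBound, pow_succ']
  have : (#(admissibleWords β (n + 1)) : ℝ) ≤ #A + #(A.filter (1 < β * cylinderBound β ·)) := by
    exact_mod_cast hcard
  linarith

lemma card_admissibleWords_le (hβ : 1 ≤ β) (n : ℕ) :
    (β - 1) * #(admissibleWords β n) ≤ β ^ (n + 1) := by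
  induction n with
  | zero => simp [admissibleWords]
  | succ n ih =>
    have := card_admissibleWords_succ_le (zero_le_one.trans hβ) n
    calc (β - 1) * #(admissibleWords β (n + 1))
        ≤ (β - 1) * (#(admissibleWords β n) + β ^ (n + 1)) := by gcongr
      _ ≤ β ^ (n + 1 + 1) := by rw [pow_succ _ (n + 1)]; nlinarith

end BetaExpansion

open BetaExpansion ExpGrowth Function
open scoped Finset ENNReal

section SkewMap

variable {β τ : ℝ}

lemma skewMap_apply (β τ : ℝ) (p : ℝ × ℝ) :
    skewMap β τ p = (map β p.1, τ * p.2 + if digit β p.1 then 1 - τ else 0) := by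
  by_cases h : p.1 ≤ β⁻¹
  · simp [skewMap, map, digit, h, not_lt.2 h]
  · simp [skewMap, map, digit, h, not_le.1 h]

lemma semiconj_fst_skewMap (β τ : ℝ) : Semiconj Prod.fst (skewMap β τ) (map β) := fun p => by
  rw [skewMap_apply]

lemma skewMap_iterate_fst (β τ : ℝ) (n : ℕ) (p : ℝ × ℝ) :
    ((skewMap β τ)^[n] p).1 = (map β)^[n] p.1 :=
  (semiconj_fst_skewMap β τ).iterate_right n p

lemma skewMap_iterate_snd_sub {p q : ℝ × ℝ} {n : ℕ}
    (h : ∀ k < n, digit β ((map β)^[k] p.1) = digit β ((map β)^[k] q.1)) :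
    ((skewMap β τ)^[n] p).2 - ((skewMap β τ)^[n] q).2 = τ ^ n * (p.2 - q.2) := by
  induction n with
  | zero => simp
  | succ n ih =>
    have ih := ih fun k hk => h k (hk.trans n.lt_succ_self)
    rw [iterate_succ_apply', iterate_succ_apply', skewMap_apply, skewMap_apply,
      skewMap_iterate_fst, skewMap_iterate_fst, h n n.lt_succ_self]
    linear_combination τ * ih

lemma dist_skewMap_iterate_le (hβ : 1 ≤ β) (hτ : |τ| ≤ 1) {p q : ℝ × ℝ} {n k : ℕ}
    (h : word β n p.1 = word β n q.1) (hk : k ≤ n) :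
    dist ((skewMap β τ)^[k] p) ((skewMap β τ)^[k] q) ≤
      dist ((map β)^[n] p.1, p.2) ((map β)^[n] q.1, q.2) := by
  have hdig := digit_iterate_eq_of_word_eq h
  have hdig' := fun j (hj : j < k) => hdig j (hj.trans_le hk)
  simp only [Prod.dist_eq, Real.dist_eq, skewMap_iterate_fst, iterate_map_sub_iterate_map hdig,
    iterate_map_sub_iterate_map hdig', skewMap_iterate_snd_sub hdig', abs_mul, abs_pow,
    abs_of_pos (zero_lt_one.trans_le hβ)]
  exact max_le_max (by gcongr)
    (mul_le_of_le_one_left (abs_nonneg _) (pow_le_one₀ (abs_nonneg _) hτ))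

lemma coverMincard_skewMap_square_le (hβ : 1 ≤ β) (hβ2 : β ≤ 2) (hτ : |τ| ≤ 1) {ε : ℝ}
    (hε : 0 < ε) : ∃ K : ℕ, ∀ n, coverMincard (skewMap β τ) (Icc 0 1 ×ˢ Icc 0 1)
      {p | dist p.1 p.2 < ε} n ≤ (#(admissibleWords β n) * K : ℕ) := by
  obtain ⟨G, -, hGfin, hG⟩ :=
    finite_cover_balls_of_compact (isCompact_Icc.prod isCompact_Icc :
      IsCompact (Icc (0 : ℝ) 1 ×ˢ Icc (0 : ℝ) 1)) (half_pos hε)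
  have hβ0 : 0 < β := zero_lt_one.trans_le hβ
  refine ⟨#hGfin.toFinset, fun n => coverMincard_le_card_mul_card (fun p => word β n p.1)
    (fun p => ((map β)^[n] p.1, p.2)) _ _ (r := ε / 2) ?_ ?_ ?_⟩
  · rintro p ⟨hp, -⟩
    exact (word_mem_admissibleWords hβ0 hp.2 n).1
  · rintro p ⟨hp1, hp2⟩
    have hφp : ((map β)^[n] p.1, p.2) ∈ Icc 0 1 ×ˢ Icc 0 1 :=
      ⟨(mapsTo_map hβ0 hβ2).iterate n hp1, hp2⟩
    simpa using hG hφp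
  · intro p _ q _ hw hpq
    rw [mem_dynEntourage]
    intro k hk
    exact (dist_skewMap_iterate_le hβ hτ hw hk.le).trans_lt (by linarith)

lemma coverEntropy_skewMap_square_le (hβ : 1 < β) (hβ2 : β ≤ 2) (hτ : |τ| ≤ 1) :
    coverEntropy (skewMap β τ) (Icc 0 1 ×ˢ Icc 0 1) ≤ Real.log β := by
  rw [coverEntropy_eq_iSup_basis Metric.uniformity_basis_dist]
  refine iSup₂_le fun ε hε => ?_
  obtain ⟨K, hK⟩ := coverMincard_skewMap_square_le hβ.le hβ2 hτ hε
  have hβ1 : 0 < β - 1 := by linarith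
  calc coverEntropyEntourage (skewMap β τ) (Icc 0 1 ×ˢ Icc 0 1) {p | dist p.1 p.2 < ε}
      ≤ expGrowthSup fun n => ENNReal.ofReal β ^ n := by
        refine expGrowthSup_le_of_eventually_le (b := ENNReal.ofReal (K * β / (β - 1)))
          ENNReal.ofReal_ne_top (.of_forall fun n => ?_)
        have hcount : (#(admissibleWords β n) * K : ℝ) ≤ K * β / (β - 1) * β ^ n := by
          rw [div_mul_eq_mul_div, le_div_iff₀ hβ1]
          have := mul_le_mul_of_nonneg_left (card_admissibleWords_le hβ.le n) K.cast_nonneg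
          linear_combination this
        calc ((coverMincard _ _ _ n : ℕ∞) : ℝ≥0∞)
            ≤ ((#(admissibleWords β n) * K : ℕ) : ℝ≥0∞) := by
              exact_mod_cast ENat.toENNReal_mono (hK n)
          _ = ENNReal.ofReal (#(admissibleWords β n) * K) := by norm_cast
          _ ≤ ENNReal.ofReal (K * β / (β - 1)) * ENNReal.ofReal β ^ n := by
              rw [← ENNReal.ofReal_pow (by linarith), ← ENNReal.ofReal_mul (by positivity)]
              exact ENNReal.ofReal_le_ofReal hcount
    _ = Real.log β := by rw [expGrowthSup_pow, ENNReal.log_ofReal_of_pos (by linarith)]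

lemma attractor_subset_square (β τ : ℝ) : attractor β τ ⊆ Icc 0 1 ×ˢ Icc 0 1 :=
  closure_minimal (iInter_subset_of_subset 0 (by simp)) (isClosed_Icc.prod isClosed_Icc)

lemma surjOn_skewMap_segment (hβ : 1 ≤ β) (τ : ℝ) :
    SurjOn (skewMap β τ) (Icc 0 1 ×ˢ {0}) (Icc 0 1 ×ˢ {0}) := by
  rintro ⟨x, _⟩ ⟨⟨hx0, hx1⟩, rfl⟩
  have hβ0 : 0 < β := zero_lt_one.trans_le hβ
  have hd : digit β (x / β) = false := by
    simpa [digit] using div_le_div_of_nonneg_right hx1 hβ0.le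
  refine ⟨(x / β, 0), ⟨⟨by positivity, (div_le_one hβ0).2 (hx1.trans hβ)⟩, rfl⟩, ?_⟩
  rw [skewMap_apply, map_of_digit_eq_false hd]
  simp [hd, mul_div_cancel₀ x hβ0.ne']

lemma segment_subset_attractor (hβ : 1 ≤ β) (τ : ℝ) : Icc 0 1 ×ˢ {0} ⊆ attractor β τ :=
  subset_closure.trans' <| subset_iInter fun i =>
    ((surjOn_skewMap_segment hβ τ).iterate i).trans
      (image_mono (prod_mono subset_rfl (by simp)))

lemma le_abs_map_sub_map (hβ : 0 < β) {ε x y : ℝ} (hε : ε * (1 + β) ≤ 1) (hxy : |x - y| < ε)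
    (hd : digit β x ≠ digit β y) : ε ≤ |map β x - map β y| := by
  wlog hx : digit β x = false generalizing x y
  · rw [abs_sub_comm]
    exact this (by rwa [abs_sub_comm]) (Ne.symm hd) (by simpa [hx] using hd.symm)
  have hy : digit β y = true := by simpa [hx] using hd.symm
  have h1 := (digit_eq_false_iff hβ).1 hx
  have h2 := (abs_sub_lt_iff.1 hxy).2
  rw [map_of_digit_eq_false hx, map_of_digit_eq_true hy]
  calc ε ≤ 1 - β * (y - x) := by nlinarith
    _ = β * x - (β * y - 1) := by ring
    _ ≤ |β * x - (β * y - 1)| := le_abs_self _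

lemma pow_mul_abs_sub_lt_one (hβ : 0 < β) {ε : ℝ} (hε : ε * (1 + β) ≤ 1) (n : ℕ) {x y : ℝ}
    (h : ∀ k < n + 1, |(map β)^[k] x - (map β)^[k] y| < ε) : β ^ (n + 1) * |x - y| < 1 := by
  induction n generalizing x y with
  | zero =>
    have hxy : |x - y| < ε := h 0 one_pos
    rw [zero_add, pow_one]
    nlinarith [abs_nonneg (x - y), mul_lt_mul_of_pos_left hxy hβ]
  | succ n ih =>
    have h0 : |x - y| < ε := h 0 (by omega)
    have h1 : |map β x - map β y| < ε := h 1 (by omega)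
    have hd : digit β x = digit β y :=
      not_not.1 fun hd => (le_abs_map_sub_map hβ hε h0 hd).not_gt h1
    have := ih fun k hk => by
      simpa only [iterate_succ_apply] using h (k + 1) (by omega)
    rw [map_sub_map_of_digit_eq hd, abs_mul, abs_of_pos hβ] at this
    linear_combination this

lemma pow_mul_abs_fst_sub_lt_one (hβ : 0 < β) {ε : ℝ} (hε : ε * (1 + β) ≤ 1) {n : ℕ}
    {a b z : ℝ × ℝ} (ha : (a, z) ∈ dynEntourage (skewMap β τ) {p | dist p.1 p.2 < ε / 2} (n + 1))
    (hb : (b, z) ∈ dynEntourage (skewMap β τ) {p | dist p.1 p.2 < ε / 2} (n + 1)) :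
    β ^ (n + 1) * |a.1 - b.1| < 1 := by
  refine pow_mul_abs_sub_lt_one hβ hε n fun k hk => ?_
  have hak : dist ((skewMap β τ)^[k] a) ((skewMap β τ)^[k] z) < ε / 2 := mem_dynEntourage.1 ha k hk
  have hbk : dist ((skewMap β τ)^[k] b) ((skewMap β τ)^[k] z) < ε / 2 := mem_dynEntourage.1 hb k hk
  rw [← skewMap_iterate_fst β τ, ← skewMap_iterate_fst β τ, ← Real.dist_eq]
  calc dist ((skewMap β τ)^[k] a).1 ((skewMap β τ)^[k] b).1
      ≤ dist ((skewMap β τ)^[k] a) ((skewMap β τ)^[k] b) := by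
        rw [Prod.dist_eq]; exact le_max_left _ _
    _ ≤ dist ((skewMap β τ)^[k] a) ((skewMap β τ)^[k] z) +
          dist ((skewMap β τ)^[k] b) ((skewMap β τ)^[k] z) := dist_triangle_right _ _ _
    _ < ε := by linarith

lemma exists_isDynNetIn_segment (hβ : 0 < β) (τ : ℝ) {ε : ℝ} (hε : ε * (1 + β) ≤ 1) (n : ℕ) :
    ∃ s : Finset (ℝ × ℝ), IsDynNetIn (skewMap β τ) (Icc 0 1 ×ˢ {0})
      {p | dist p.1 p.2 < ε / 2} (n + 1) s ∧ β ^ (n + 1) ≤ #s := by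
  have hN : 0 < β ^ (n + 1) := by positivity
  set point : ℕ → ℝ × ℝ := fun i => (i / β ^ (n + 1), 0)
  have hinj : Injective point := fun i j hij => by
    simpa [point, div_left_inj' hN.ne'] using congrArg Prod.fst hij
  refine ⟨(Finset.range (⌊β ^ (n + 1)⌋₊ + 1)).image point, ⟨?_, ?_⟩, ?_⟩
  · simp only [Finset.coe_image, Finset.coe_range, image_subset_iff]
    intro i hi
    refine ⟨⟨by positivity, (div_le_one hN).2 ?_⟩, rfl⟩
    exact (Nat.cast_le.2 (Nat.lt_succ_iff.1 hi)).trans (Nat.floor_le hN.le)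
  · simp only [Finset.coe_image]
    rintro _ ⟨i, -, rfl⟩ _ ⟨j, -, rfl⟩ hij
    refine disjoint_left.2 fun z hzi hzj => ?_
    have hclose := pow_mul_abs_fst_sub_lt_one hβ hε hzi hzj
    have hsep : (1 : ℝ) ≤ |(i : ℝ) - j| := by
      have hij' : (i : ℤ) - j ≠ 0 := sub_ne_zero.2 fun h => hij (by rw [Nat.cast_inj.1 h])
      exact_mod_cast Int.one_le_abs hij'
    rw [← sub_div, abs_div, abs_of_pos hN, mul_div_cancel₀ _ hN.ne'] at hclose
    linarith
  · rw [Finset.card_image_of_injective _ hinj, Finset.card_range]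
    exact_mod_cast (Nat.lt_floor_add_one _).le

lemma log_le_netEntropyEntourage_segment (hβ : 0 < β) (τ : ℝ) {ε : ℝ} (hε : ε * (1 + β) ≤ 1) :
    (Real.log β : EReal) ≤
      netEntropyEntourage (skewMap β τ) (Icc 0 1 ×ˢ {0}) {p | dist p.1 p.2 < ε / 2} := by
  rw [← ENNReal.log_ofReal_of_pos hβ, ← expGrowthSup_pow, netEntropyEntourage]
  refine expGrowthSup_eventually_monotone (Filter.eventually_atTop.2 ⟨1, fun n hn => ?_⟩)
  obtain ⟨m, rfl⟩ := Nat.exists_eq_add_of_le' hn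
  obtain ⟨s, hs, hcard⟩ := exists_isDynNetIn_segment hβ τ hε m
  calc ENNReal.ofReal β ^ (m + 1) = ENNReal.ofReal (β ^ (m + 1)) :=
        (ENNReal.ofReal_pow hβ.le _).symm
    _ ≤ ENNReal.ofReal #s := ENNReal.ofReal_le_ofReal hcard
    _ = (#s : ℝ≥0∞) := ENNReal.ofReal_natCast _
    _ ≤ _ := by simpa using ENat.toENNReal_mono hs.card_le_netMaxcard

end SkewMap

/-- The topological entropy of `(Λ_{β,τ}, f)` equals `log β`. -/
theorem stmt14 (β τ : ℝ) (hβ : 1 < β) (hβ2 : β < 2) (hτ0 : 0 < τ) (hτ : τ < 1 / 2) :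
    coverEntropy (skewMap β τ) (attractor β τ) = Real.log β := by
  have hτ1 : |τ| ≤ 1 := abs_le.2 ⟨by linarith, by linarith⟩
  have hε : (1 + β)⁻¹ * (1 + β) ≤ 1 := (inv_mul_cancel₀ (by positivity)).le
  refine le_antisymm ?_ ?_
  · calc coverEntropy (skewMap β τ) (attractor β τ)
        ≤ coverEntropy (skewMap β τ) (Icc 0 1 ×ˢ Icc 0 1) :=
          coverEntropy_monotone _ (attractor_subset_square β τ)
      _ ≤ Real.log β := coverEntropy_skewMap_square_le hβ hβ2.le hτ1
  · calc (Real.log β : EReal)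
        ≤ netEntropyEntourage (skewMap β τ) (Icc 0 1 ×ˢ {0})
            {p | dist p.1 p.2 < (1 + β)⁻¹ / 2} :=
          log_le_netEntropyEntourage_segment (zero_lt_one.trans hβ) τ hε
      _ ≤ netEntropyEntourage (skewMap β τ) (attractor β τ)
            {p | dist p.1 p.2 < (1 + β)⁻¹ / 2} :=
          netEntropyEntourage_monotone _ _ (segment_subset_attractor hβ.le τ)
      _ ≤ coverEntropy (skewMap β τ) (attractor β τ) :=
          netEntropyEntourage_le_coverEntropy _ _ (Metric.dist_mem_uniformity (by positivity))
end
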